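/- arXiv:1712.00723 — 5 statements merged into one kernel-verified Lean document; each statement's English description precedes it below -/
import Mathlib

section
/- With the quadrilateral setup below, the alternating sum of the edge averages of the function ξ² − η² satisfies ⨍_{e₁}(ξ²−η²) − ⨍_{e₂}(ξ²−η²) + ⨍_{e₃}(ξ²−η²) − ⨍_{e₄}(ξ²−η²) = 8/3; in particular this value is independent of the shape parameters α and β of the quadrilateral. -/
/-!
The coordinates `ξ, η` are affine, so along an edge they interpolate linearly between their
values at the endpoints, and the average of `ξ² − η²` over `[p, q]` is
`((ξp² + ξp ξq + ξq²) − (ηp² + ηp ηq + ηq²)) / 3`. In the alternating sum every square occurs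
once with each sign, leaving `((ξa₁ − ξa₃)(ξa₂ − ξa₄) − (ηa₁ − ηa₃)(ηa₂ − ηa₄)) / 3`. The
diagonals are `a₁ − a₃ = 2(s − r)` and `a₂ − a₄ = −2(r + s)`, whatever the shape of `Q`,
so this is `(4 + 4) / 3`.
-/

/-- The average of a function over the segment from `p` to `q`. -/
noncomputable def edgeAvg (p q : ℝ × ℝ) (v : ℝ × ℝ → ℝ) : ℝ :=
  ∫ t in (0:ℝ)..1, v ((1 - t) • p + t • q)

theorem integral_zero_one_interp_sq (u v : ℝ) :
    ∫ t in (0:ℝ)..1, ((1 - t) * u + t * v) ^ 2 = (u ^ 2 + u * v + v ^ 2) / 3 := by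
  have h : ∀ t : ℝ, ((1 - t) * u + t * v) ^ 2 = u ^ 2 + 2 * u * (v - u) * t + (v - u) ^ 2 * t ^ 2 :=
    fun t => by ring
  simp only [h]
  rw [intervalIntegral.integral_add (Continuous.intervalIntegrable (by fun_prop) _ _)
      (Continuous.intervalIntegrable (by fun_prop) _ _),
    intervalIntegral.integral_add intervalIntegrable_const
      (Continuous.intervalIntegrable (by fun_prop) _ _),
    intervalIntegral.integral_const, intervalIntegral.integral_const_mul,
    intervalIntegral.integral_const_mul, integral_id, integral_pow]
  norm_num
  ring

section AffineCoordinates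

variable {R V : Type*} [CommRing R] [AddCommGroup V] [Module R V] {O r s : V} {ξ η : V → R}

theorem coords_eq_of_eq_add_smul (hind : LinearIndependent R ![r, s])
    (hcoord : ∀ x, x = O + ξ x • r + η x • s) {x : V} {c d : R}
    (hx : x = O + c • r + d • s) : ξ x = c ∧ η x = d := by
  have h : (ξ x - c) • r + (η x - d) • s = 0 :=
    calc (ξ x - c) • r + (η x - d) • s = (O + ξ x • r + η x • s) - (O + c • r + d • s) := by
          module
      _ = 0 := sub_eq_zero.2 ((hcoord x).symm.trans hx)
  obtain ⟨hξ, hη⟩ := LinearIndependent.pair_iff.1 hind _ _ h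
  exact ⟨sub_eq_zero.1 hξ, sub_eq_zero.1 hη⟩

theorem coords_sub_eq_of_sub_eq (hind : LinearIndependent R ![r, s])
    (hcoord : ∀ x, x = O + ξ x • r + η x • s) {p q : V} {c d : R}
    (h : p - q = c • r + d • s) : ξ p - ξ q = c ∧ η p - η q = d := by
  have hp : p = O + (ξ q + c) • r + (η q + d) • s :=
    calc p = q + (p - q) := by abel
      _ = (O + ξ q • r + η q • s) + (c • r + d • s) := by rw [← hcoord q, h]
      _ = O + (ξ q + c) • r + (η q + d) • s := by module
  obtain ⟨hξ, hη⟩ := coords_eq_of_eq_add_smul hind hcoord hp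
  exact ⟨by rw [hξ]; ring, by rw [hη]; ring⟩

theorem coords_smul_add_smul (hind : LinearIndependent R ![r, s])
    (hcoord : ∀ x, x = O + ξ x • r + η x • s) (p q : V) (t : R) :
    ξ ((1 - t) • p + t • q) = (1 - t) * ξ p + t * ξ q ∧
      η ((1 - t) • p + t • q) = (1 - t) * η p + t * η q :=
  coords_eq_of_eq_add_smul hind hcoord <| by
    conv_lhs => rw [hcoord p, hcoord q]
    module

end AffineCoordinates

theorem edgeAvg_sq_sub_sq {O r s : ℝ × ℝ} {ξ η : ℝ × ℝ → ℝ}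
    (hind : LinearIndependent ℝ ![r, s]) (hcoord : ∀ x, x = O + ξ x • r + η x • s)
    (p q : ℝ × ℝ) :
    edgeAvg p q (fun x => ξ x ^ 2 - η x ^ 2) =
      ((ξ p ^ 2 + ξ p * ξ q + ξ q ^ 2) - (η p ^ 2 + η p * η q + η q ^ 2)) / 3 := by
  simp only [edgeAvg, coords_smul_add_smul hind hcoord p q]
  rw [intervalIntegral.integral_sub (Continuous.intervalIntegrable (by fun_prop) _ _)
      (Continuous.intervalIntegrable (by fun_prop) _ _),
    integral_zero_one_interp_sq, integral_zero_one_interp_sq]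
  ring

theorem alternating_sum_edge_averages_xi_sq_sub_eta_sq_general
    (a₁ a₂ a₃ a₄ O r s : ℝ × ℝ) (ξ η : ℝ × ℝ → ℝ)
    (hr : r = (1/4 : ℝ) • (a₃ + a₄ - a₁ - a₂))
    (hs : s = (1/4 : ℝ) • (a₄ + a₁ - a₂ - a₃))
    (hind : LinearIndependent ℝ ![r, s])
    (hcoord : ∀ x : ℝ × ℝ, x = O + ξ x • r + η x • s) :
    edgeAvg a₁ a₂ (fun x => ξ x ^ 2 - η x ^ 2)
      - edgeAvg a₂ a₃ (fun x => ξ x ^ 2 - η x ^ 2)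
      + edgeAvg a₃ a₄ (fun x => ξ x ^ 2 - η x ^ 2)
      - edgeAvg a₄ a₁ (fun x => ξ x ^ 2 - η x ^ 2) = 8 / 3 := by
  obtain ⟨hξ₁₃, hη₁₃⟩ : ξ a₁ - ξ a₃ = -2 ∧ η a₁ - η a₃ = 2 :=
    coords_sub_eq_of_sub_eq hind hcoord (by rw [hr, hs]; module)
  obtain ⟨hξ₂₄, hη₂₄⟩ : ξ a₂ - ξ a₄ = -2 ∧ η a₂ - η a₄ = -2 :=
    coords_sub_eq_of_sub_eq hind hcoord (by rw [hr, hs]; module)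
  simp only [edgeAvg_sq_sub_sq hind hcoord]
  calc _ = ((ξ a₁ - ξ a₃) * (ξ a₂ - ξ a₄) - (η a₁ - η a₃) * (η a₂ - η a₄)) / 3 := by ring
    _ = 8 / 3 := by rw [hξ₁₃, hη₁₃, hξ₂₄, hη₂₄]; norm_num

/-- The alternating sum of the edge averages of ξ² − η² over the four edges of a
quadrilateral equals 8/3, independently of the shape parameters α and β. -/
theorem alternating_sum_edge_averages_xi_sq_sub_eta_sq
    (a₁ a₂ a₃ a₄ O r s : ℝ × ℝ) (ξ η : ℝ × ℝ → ℝ) (α β : ℝ)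
    (hO : O = (1/4 : ℝ) • (a₁ + a₂ + a₃ + a₄))
    (hr : r = (1/4 : ℝ) • (a₃ + a₄ - a₁ - a₂))
    (hs : s = (1/4 : ℝ) • (a₄ + a₁ - a₂ - a₃))
    (hind : LinearIndependent ℝ ![r, s])
    (hcoord : ∀ x : ℝ × ℝ, x = O + ξ x • r + η x • s)
    (ha₄ : a₄ = O + (1 + α) • r + (1 + β) • s) :
    edgeAvg a₁ a₂ (fun x => ξ x ^ 2 - η x ^ 2)
      - edgeAvg a₂ a₃ (fun x => ξ x ^ 2 - η x ^ 2)
      + edgeAvg a₃ a₄ (fun x => ξ x ^ 2 - η x ^ 2)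
      - edgeAvg a₄ a₁ (fun x => ξ x ^ 2 - η x ^ 2) = 8 / 3 :=
  alternating_sum_edge_averages_xi_sq_sub_eta_sq_general a₁ a₂ a₃ a₄ O r s ξ η hr hs hind hcoord
end

section
/- (Unisolvence of the quadrilateral generalized bilinear element.) With the quadrilateral setup below and assuming Q is convex, i.e. |α| + |β| < 1, the following holds: for every (d₁, d₂, d₃, d₄) ∈ ℝ⁴ there exist unique real coefficients c₀, c₁, c₂, c₃ such that the function v : ℝ² → ℝ defined by v(x) = c₀ + c₁·ξ(x) + c₂·η(x) + c₃·(ξ(x)² − η(x)²) satisfies ⨍_{eᵢ} v = dᵢ for i = 1, 2, 3, 4. -/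
/-!
In the coordinates `(ξ, η)` the vertices of `Q` are `(-1-α, 1-β)`, `(α-1, β-1)`, `(1-α, -1-β)`
and `(1+α, 1+β)`, and `ξ, η` are affine along every edge, so each edge average of
`c₀ + c₁ξ + c₂η + c₃(ξ² - η²)` is an explicit linear form in `c` (the integrand is a quadratic
polynomial in the edge parameter). The alternating sum of the four forms is `8 c₃ / 3`, whatever
`α` and `β` are; once `c₃` is known, the differences of opposite edges give `c₁` and `c₂`, and the
total sum gives `c₀`. So the 4 × 4 system has an explicit inverse.
-/

lemma integral_unitInterval_quadratic (k₀ k₁ k₂ : ℝ) :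
    ∫ t in (0:ℝ)..1, (k₀ + k₁ * t + k₂ * t ^ 2) = k₀ + k₁ / 2 + k₂ / 3 := by
  have hint (f : ℝ → ℝ) (hf : Continuous f) : IntervalIntegrable f MeasureTheory.volume 0 1 :=
    hf.intervalIntegrable _ _
  rw [intervalIntegral.integral_add (hint _ (by fun_prop)) (hint _ (by fun_prop)),
    intervalIntegral.integral_add (hint _ (by fun_prop)) (hint _ (by fun_prop)),
    intervalIntegral.integral_const_mul, intervalIntegral.integral_const_mul]
  norm_num
  ring

section AffineCoordinates

variable {E : Type*} [AddCommGroup E] [Module ℝ E] {O r s : E} {ξ η : E → ℝ}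

lemma coords_eq_of_eq (hind : LinearIndependent ℝ ![r, s])
    (hcoord : ∀ x : E, x = O + ξ x • r + η x • s) {x : E} {u v : ℝ}
    (hx : x = O + u • r + v • s) : ξ x = u ∧ η x = v := by
  have h : (ξ x - u) • r + (η x - v) • s = 0 := by
    linear_combination (norm := module) hx - hcoord x
  obtain ⟨hu, hv⟩ := LinearIndependent.pair_iff.1 hind _ _ h
  exact ⟨sub_eq_zero.1 hu, sub_eq_zero.1 hv⟩

lemma coords_segment (hind : LinearIndependent ℝ ![r, s])
    (hcoord : ∀ x : E, x = O + ξ x • r + η x • s) (p q : E) (t : ℝ) :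
    ξ ((1 - t) • p + t • q) = (1 - t) * ξ p + t * ξ q ∧
      η ((1 - t) • p + t • q) = (1 - t) * η p + t * η q :=
  coords_eq_of_eq hind hcoord <| by
    linear_combination (norm := module) (1 - t) • hcoord p + t • hcoord q

lemma quadrilateral_vertices_eq {a₁ a₂ a₃ a₄ O r s : E} {α β : ℝ}
    (hO : O = (1/4 : ℝ) • (a₁ + a₂ + a₃ + a₄))
    (hr : r = (1/4 : ℝ) • (a₃ + a₄ - a₁ - a₂))
    (hs : s = (1/4 : ℝ) • (a₄ + a₁ - a₂ - a₃))
    (ha₄ : a₄ = O + (1 + α) • r + (1 + β) • s) :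
    a₁ = O + (-1 - α) • r + (1 - β) • s ∧
      a₂ = O + (α - 1) • r + (β - 1) • s ∧
      a₃ = O + (1 - α) • r + (-1 - β) • s := by
  refine ⟨?_, ?_, ?_⟩
  · linear_combination (norm := module) -ha₄ - 2 • hO - 2 • hs
  · linear_combination (norm := module) ha₄ + 2 • hr + 2 • hs
  · linear_combination (norm := module) -ha₄ - 2 • hO - 2 • hr

end AffineCoordinates

/-- The average of `c₀ + c₁u + c₂v + c₃(u² - v²)` over the segment from `(u₁, v₁)` to
`(u₂, v₂)`. -/
noncomputable def qgbSegmentAvg (c : ℝ × ℝ × ℝ × ℝ) (u₁ v₁ u₂ v₂ : ℝ) : ℝ :=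
  c.1 + c.2.1 * (u₁ + u₂) / 2 + c.2.2.1 * (v₁ + v₂) / 2
    + c.2.2.2 * ((u₁ ^ 2 + u₁ * u₂ + u₂ ^ 2) - (v₁ ^ 2 + v₁ * v₂ + v₂ ^ 2)) / 3

lemma edgeAvg_eq_qgbSegmentAvg {ξ η : ℝ × ℝ → ℝ} {p q : ℝ × ℝ}
    (hseg : ∀ t : ℝ, ξ ((1 - t) • p + t • q) = (1 - t) * ξ p + t * ξ q ∧
      η ((1 - t) • p + t • q) = (1 - t) * η p + t * η q)
    (c : ℝ × ℝ × ℝ × ℝ) :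
    edgeAvg p q (fun x => c.1 + c.2.1 * ξ x + c.2.2.1 * η x + c.2.2.2 * (ξ x ^ 2 - η x ^ 2))
      = qgbSegmentAvg c (ξ p) (η p) (ξ q) (η q) := by
  obtain ⟨c₀, c₁, c₂, c₃⟩ := c
  set u₁ := ξ p; set u₂ := ξ q; set v₁ := η p; set v₂ := η q
  have hquad : edgeAvg p q
        (fun x => c₀ + c₁ * ξ x + c₂ * η x + c₃ * (ξ x ^ 2 - η x ^ 2))
      = ∫ t in (0:ℝ)..1,
          ((c₀ + c₁ * u₁ + c₂ * v₁ + c₃ * (u₁ ^ 2 - v₁ ^ 2))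
            + (c₁ * (u₂ - u₁) + c₂ * (v₂ - v₁) + 2 * c₃ * (u₁ * (u₂ - u₁) - v₁ * (v₂ - v₁))) * t
            + c₃ * ((u₂ - u₁) ^ 2 - (v₂ - v₁) ^ 2) * t ^ 2) := by
    refine intervalIntegral.integral_congr fun t _ => ?_
    simp only [(hseg t).1, (hseg t).2]
    ring
  rw [hquad, integral_unitInterval_quadratic, qgbSegmentAvg]
  ring

lemma qgbSegmentAvg_vertices_iff (α β d₁ d₂ d₃ d₄ : ℝ) (c : ℝ × ℝ × ℝ × ℝ) :
    (qgbSegmentAvg c (-1 - α) (1 - β) (α - 1) (β - 1) = d₁ ∧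
      qgbSegmentAvg c (α - 1) (β - 1) (1 - α) (-1 - β) = d₂ ∧
      qgbSegmentAvg c (1 - α) (-1 - β) (1 + α) (1 + β) = d₃ ∧
      qgbSegmentAvg c (1 + α) (1 + β) (-1 - α) (1 - β) = d₄) ↔
    c = ((d₁ + d₂ + d₃ + d₄) / 4 - (α ^ 2 - β ^ 2) * (d₁ - d₂ + d₃ - d₄) / 8,
      (d₃ - d₁) / 2 + β * (d₁ - d₂ + d₃ - d₄) / 4,
      (d₄ - d₂) / 2 - α * (d₁ - d₂ + d₃ - d₄) / 4,
      3 * (d₁ - d₂ + d₃ - d₄) / 8) := by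
  obtain ⟨c₀, c₁, c₂, c₃⟩ := c
  simp only [qgbSegmentAvg, Prod.mk.injEq]
  constructor <;> rintro ⟨rfl, rfl, rfl, rfl⟩ <;> refine ⟨?_, ?_, ?_, ?_⟩ <;> ring

theorem qgb_unisolvence_general
    (a₁ a₂ a₃ a₄ O r s : ℝ × ℝ) (ξ η : ℝ × ℝ → ℝ) (α β : ℝ)
    (hO : O = (1/4 : ℝ) • (a₁ + a₂ + a₃ + a₄))
    (hr : r = (1/4 : ℝ) • (a₃ + a₄ - a₁ - a₂))
    (hs : s = (1/4 : ℝ) • (a₄ + a₁ - a₂ - a₃))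
    (hind : LinearIndependent ℝ ![r, s])
    (hcoord : ∀ x : ℝ × ℝ, x = O + ξ x • r + η x • s)
    (ha₄ : a₄ = O + (1 + α) • r + (1 + β) • s) :
    ∀ d₁ d₂ d₃ d₄ : ℝ,
      ∃! c : ℝ × ℝ × ℝ × ℝ,
        edgeAvg a₁ a₂
          (fun x => c.1 + c.2.1 * ξ x + c.2.2.1 * η x + c.2.2.2 * (ξ x ^ 2 - η x ^ 2)) = d₁ ∧
        edgeAvg a₂ a₃
          (fun x => c.1 + c.2.1 * ξ x + c.2.2.1 * η x + c.2.2.2 * (ξ x ^ 2 - η x ^ 2)) = d₂ ∧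
        edgeAvg a₃ a₄
          (fun x => c.1 + c.2.1 * ξ x + c.2.2.1 * η x + c.2.2.2 * (ξ x ^ 2 - η x ^ 2)) = d₃ ∧
        edgeAvg a₄ a₁
          (fun x => c.1 + c.2.1 * ξ x + c.2.2.1 * η x + c.2.2.2 * (ξ x ^ 2 - η x ^ 2)) = d₄ := by
  intro d₁ d₂ d₃ d₄
  obtain ⟨ha₁, ha₂, ha₃⟩ := quadrilateral_vertices_eq hO hr hs ha₄
  obtain ⟨hξ₁, hη₁⟩ := coords_eq_of_eq hind hcoord ha₁
  obtain ⟨hξ₂, hη₂⟩ := coords_eq_of_eq hind hcoord ha₂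
  obtain ⟨hξ₃, hη₃⟩ := coords_eq_of_eq hind hcoord ha₃
  obtain ⟨hξ₄, hη₄⟩ := coords_eq_of_eq hind hcoord ha₄
  simp only [edgeAvg_eq_qgbSegmentAvg (coords_segment hind hcoord _ _),
    hξ₁, hη₁, hξ₂, hη₂, hξ₃, hη₃, hξ₄, hη₄]
  exact ⟨_, (qgbSegmentAvg_vertices_iff α β d₁ d₂ d₃ d₄ _).2 rfl,
    fun c hc => (qgbSegmentAvg_vertices_iff α β d₁ d₂ d₃ d₄ c).1 hc⟩

/-- Unisolvence of the quadrilateral generalized bilinear (QGB) element: on a convex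
quadrilateral (|α| + |β| < 1), for any prescribed edge averages d₁, d₂, d₃, d₄ there
are unique coefficients c₀, c₁, c₂, c₃ such that the function
c₀ + c₁ξ + c₂η + c₃(ξ² − η²) has those edge averages. -/
theorem qgb_unisolvence
    (a₁ a₂ a₃ a₄ O r s : ℝ × ℝ) (ξ η : ℝ × ℝ → ℝ) (α β : ℝ)
    (hO : O = (1/4 : ℝ) • (a₁ + a₂ + a₃ + a₄))
    (hr : r = (1/4 : ℝ) • (a₃ + a₄ - a₁ - a₂))
    (hs : s = (1/4 : ℝ) • (a₄ + a₁ - a₂ - a₃))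
    (hind : LinearIndependent ℝ ![r, s])
    (hcoord : ∀ x : ℝ × ℝ, x = O + ξ x • r + η x • s)
    (ha₄ : a₄ = O + (1 + α) • r + (1 + β) • s)
    (hconv : |α| + |β| < 1) :
    ∀ d₁ d₂ d₃ d₄ : ℝ,
      ∃! c : ℝ × ℝ × ℝ × ℝ,
        edgeAvg a₁ a₂
          (fun x => c.1 + c.2.1 * ξ x + c.2.2.1 * η x + c.2.2.2 * (ξ x ^ 2 - η x ^ 2)) = d₁ ∧
        edgeAvg a₂ a₃
          (fun x => c.1 + c.2.1 * ξ x + c.2.2.1 * η x + c.2.2.2 * (ξ x ^ 2 - η x ^ 2)) = d₂ ∧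
        edgeAvg a₃ a₄
          (fun x => c.1 + c.2.1 * ξ x + c.2.2.1 * η x + c.2.2.2 * (ξ x ^ 2 - η x ^ 2)) = d₃ ∧
        edgeAvg a₄ a₁
          (fun x => c.1 + c.2.1 * ξ x + c.2.2.1 * η x + c.2.2.2 * (ξ x ^ 2 - η x ^ 2)) = d₄ :=
  qgb_unisolvence_general a₁ a₂ a₃ a₄ O r s ξ η α β hO hr hs hind hcoord ha₄
end

section
/- With the quadrilateral setup below, let v : ℝ² → ℝ be of the form v(x) = c₀ + c₁·ξ(x) + c₂·η(x) + c₃·(ξ(x)² − η(x)²) with real coefficients c₀, c₁, c₂, c₃, and set dᵢ = ⨍_{eᵢ} v for i = 1, 2, 3, 4. Then c₃ = (3/8)·(d₁ + d₃ − d₂ − d₄). Consequently, v is an affine function (i.e. c₃ = 0) if and only if d₁ + d₃ = d₂ + d₄. -/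
/-!
Since `ξ` and `η` are affine, `v` restricted to an edge is a quadratic polynomial in the
parameter, so each edge average is an explicit quadratic expression in the coordinates of the
endpoints. In the alternating sum `d₁ - d₂ + d₃ - d₄` the constant and linear parts cancel and
what remains is `c₃ / 3` times `Δξ₁₃ Δξ₂₄ - Δη₁₃ Δη₂₄`, the differences taken along the two
diagonals. These are read off from `a₁ - a₃ = -2 r + 2 s` and `a₂ - a₄ = -2 r - 2 s`, giving
`d₁ - d₂ + d₃ - d₄ = 8 c₃ / 3`.
-/

open intervalIntegral

section AffineCoordinates

variable {E : Type*} [AddCommGroup E] [Module ℝ E] {O r s : E} {ξ η : E → ℝ}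

theorem coord_sub_eq_of_sub_eq (hind : LinearIndependent ℝ ![r, s])
    (hcoord : ∀ x, x = O + ξ x • r + η x • s) {p q : E} {a b : ℝ}
    (h : p - q = a • r + b • s) : ξ p - ξ q = a ∧ η p - η q = b :=
  hind.eq_of_pair (by linear_combination (norm := module) h - hcoord p + hcoord q)

theorem coord_segment (hind : LinearIndependent ℝ ![r, s])
    (hcoord : ∀ x, x = O + ξ x • r + η x • s) (p q : E) (t : ℝ) :
    ξ ((1 - t) • p + t • q) = (1 - t) * ξ p + t * ξ q ∧
      η ((1 - t) • p + t • q) = (1 - t) * η p + t * η q :=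
  hind.eq_of_pair <| by
    linear_combination (norm := module)
      (1 - t) • hcoord p + t • hcoord q - hcoord ((1 - t) • p + t • q)

theorem diagonal₁₃_eq {a₁ a₂ a₃ a₄ : E}
    (hr : r = (1/4 : ℝ) • (a₃ + a₄ - a₁ - a₂)) (hs : s = (1/4 : ℝ) • (a₄ + a₁ - a₂ - a₃)) :
    a₁ - a₃ = (-2 : ℝ) • r + (2 : ℝ) • s := by
  subst hr hs
  module

theorem diagonal₂₄_eq {a₁ a₂ a₃ a₄ : E}
    (hr : r = (1/4 : ℝ) • (a₃ + a₄ - a₁ - a₂)) (hs : s = (1/4 : ℝ) • (a₄ + a₁ - a₂ - a₃)) :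
    a₂ - a₄ = (-2 : ℝ) • r + (-2 : ℝ) • s := by
  subst hr hs
  module

end AffineCoordinates

theorem integral_quadratic_unitInterval (A B C : ℝ) :
    ∫ t in (0:ℝ)..1, (A + B * t + C * t ^ 2) = A + B / 2 + C / 3 := by
  rw [integral_add (Continuous.intervalIntegrable (by fun_prop) _ _)
      (Continuous.intervalIntegrable (by fun_prop) _ _),
    integral_add intervalIntegrable_const (Continuous.intervalIntegrable (by fun_prop) _ _),
    integral_const_mul, integral_const_mul, integral_id, integral_pow]
  norm_num
  ring

section QGBShape

variable (c₀ c₁ c₂ c₃ : ℝ)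

def qgbShape (x y : ℝ) : ℝ :=
  c₀ + c₁ * x + c₂ * y + c₃ * (x ^ 2 - y ^ 2)

noncomputable def qgbShapeSegmentAvg (x₀ y₀ x₁ y₁ : ℝ) : ℝ :=
  c₀ + c₁ * (x₀ + x₁) / 2 + c₂ * (y₀ + y₁) / 2 +
    c₃ * ((x₀ ^ 2 + x₀ * x₁ + x₁ ^ 2) - (y₀ ^ 2 + y₀ * y₁ + y₁ ^ 2)) / 3

theorem integral_qgbShape_segment (x₀ y₀ x₁ y₁ : ℝ) :
    ∫ t in (0:ℝ)..1, qgbShape c₀ c₁ c₂ c₃ ((1 - t) * x₀ + t * x₁) ((1 - t) * y₀ + t * y₁) =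
      qgbShapeSegmentAvg c₀ c₁ c₂ c₃ x₀ y₀ x₁ y₁ := by
  have hquad : ∀ t : ℝ,
      qgbShape c₀ c₁ c₂ c₃ ((1 - t) * x₀ + t * x₁) ((1 - t) * y₀ + t * y₁) =
        qgbShape c₀ c₁ c₂ c₃ x₀ y₀ +
          (c₁ * (x₁ - x₀) + c₂ * (y₁ - y₀) + 2 * c₃ * (x₀ * (x₁ - x₀) - y₀ * (y₁ - y₀))) * t +
          c₃ * ((x₁ - x₀) ^ 2 - (y₁ - y₀) ^ 2) * t ^ 2 := by
    intro t
    simp only [qgbShape]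
    ring
  simp only [hquad]
  rw [integral_quadratic_unitInterval]
  simp only [qgbShape, qgbShapeSegmentAvg]
  ring

theorem qgbShapeSegmentAvg_alternating_sum (x₁ y₁ x₂ y₂ x₃ y₃ x₄ y₄ : ℝ) :
    qgbShapeSegmentAvg c₀ c₁ c₂ c₃ x₁ y₁ x₂ y₂ + qgbShapeSegmentAvg c₀ c₁ c₂ c₃ x₃ y₃ x₄ y₄ -
        qgbShapeSegmentAvg c₀ c₁ c₂ c₃ x₂ y₂ x₃ y₃ - qgbShapeSegmentAvg c₀ c₁ c₂ c₃ x₄ y₄ x₁ y₁ =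
      c₃ / 3 * ((x₁ - x₃) * (x₂ - x₄) - (y₁ - y₃) * (y₂ - y₄)) := by
  simp only [qgbShapeSegmentAvg]
  ring

theorem edgeAvg_qgbShape {O r s : ℝ × ℝ} {ξ η : ℝ × ℝ → ℝ}
    (hind : LinearIndependent ℝ ![r, s]) (hcoord : ∀ x, x = O + ξ x • r + η x • s)
    (p q : ℝ × ℝ) :
    edgeAvg p q (fun x => qgbShape c₀ c₁ c₂ c₃ (ξ x) (η x)) =
      qgbShapeSegmentAvg c₀ c₁ c₂ c₃ (ξ p) (η p) (ξ q) (η q) := by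
  rw [← integral_qgbShape_segment, edgeAvg]
  congr 1
  funext t
  obtain ⟨hξ, hη⟩ := coord_segment hind hcoord p q t
  rw [hξ, hη]

end QGBShape

theorem qgb_top_coefficient_from_edge_averages_general
    (a₁ a₂ a₃ a₄ O r s : ℝ × ℝ) (ξ η : ℝ × ℝ → ℝ)
    (hr : r = (1/4 : ℝ) • (a₃ + a₄ - a₁ - a₂))
    (hs : s = (1/4 : ℝ) • (a₄ + a₁ - a₂ - a₃))
    (hind : LinearIndependent ℝ ![r, s])
    (hcoord : ∀ x : ℝ × ℝ, x = O + ξ x • r + η x • s)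
    (v : ℝ × ℝ → ℝ) (c₀ c₁ c₂ c₃ d₁ d₂ d₃ d₄ : ℝ)
    (hv : v = fun x => c₀ + c₁ * ξ x + c₂ * η x + c₃ * (ξ x ^ 2 - η x ^ 2))
    (hd₁ : d₁ = edgeAvg a₁ a₂ v) (hd₂ : d₂ = edgeAvg a₂ a₃ v)
    (hd₃ : d₃ = edgeAvg a₃ a₄ v) (hd₄ : d₄ = edgeAvg a₄ a₁ v) :
    c₃ = 3 / 8 * (d₁ + d₃ - d₂ - d₄) ∧ (c₃ = 0 ↔ d₁ + d₃ = d₂ + d₄) := by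
  have hedge (p q : ℝ × ℝ) :
      edgeAvg p q v = qgbShapeSegmentAvg c₀ c₁ c₂ c₃ (ξ p) (η p) (ξ q) (η q) :=
    hv ▸ edgeAvg_qgbShape c₀ c₁ c₂ c₃ hind hcoord p q
  obtain ⟨hξ₁₃, hη₁₃⟩ := coord_sub_eq_of_sub_eq hind hcoord (diagonal₁₃_eq hr hs)
  obtain ⟨hξ₂₄, hη₂₄⟩ := coord_sub_eq_of_sub_eq hind hcoord (diagonal₂₄_eq hr hs)
  have hc₃ : c₃ = 3 / 8 * (d₁ + d₃ - d₂ - d₄) := by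
    rw [hd₁, hd₂, hd₃, hd₄, hedge, hedge, hedge, hedge, qgbShapeSegmentAvg_alternating_sum,
      hξ₁₃, hξ₂₄, hη₁₃, hη₂₄]
    ring
  refine ⟨hc₃, ?_⟩
  rw [hc₃]
  constructor <;> intro h <;> linarith

/-- For a QGB element function v = c₀ + c₁ξ + c₂η + c₃(ξ²−η²) with edge averages
dᵢ = ⨍_{eᵢ} v, the top coefficient satisfies c₃ = (3/8)(d₁ + d₃ − d₂ − d₄);
consequently v is affine (c₃ = 0) iff d₁ + d₃ = d₂ + d₄. -/
theorem qgb_top_coefficient_from_edge_averages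
    (a₁ a₂ a₃ a₄ O r s : ℝ × ℝ) (ξ η : ℝ × ℝ → ℝ) (α β : ℝ)
    (hO : O = (1/4 : ℝ) • (a₁ + a₂ + a₃ + a₄))
    (hr : r = (1/4 : ℝ) • (a₃ + a₄ - a₁ - a₂))
    (hs : s = (1/4 : ℝ) • (a₄ + a₁ - a₂ - a₃))
    (hind : LinearIndependent ℝ ![r, s])
    (hcoord : ∀ x : ℝ × ℝ, x = O + ξ x • r + η x • s)
    (ha₄ : a₄ = O + (1 + α) • r + (1 + β) • s)
    (v : ℝ × ℝ → ℝ) (c₀ c₁ c₂ c₃ d₁ d₂ d₃ d₄ : ℝ)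
    (hv : v = fun x => c₀ + c₁ * ξ x + c₂ * η x + c₃ * (ξ x ^ 2 - η x ^ 2))
    (hd₁ : d₁ = edgeAvg a₁ a₂ v) (hd₂ : d₂ = edgeAvg a₂ a₃ v)
    (hd₃ : d₃ = edgeAvg a₃ a₄ v) (hd₄ : d₄ = edgeAvg a₄ a₁ v) :
    c₃ = 3 / 8 * (d₁ + d₃ - d₂ - d₄) ∧ (c₃ = 0 ↔ d₁ + d₃ = d₂ + d₄) :=
  qgb_top_coefficient_from_edge_averages_general a₁ a₂ a₃ a₄ O r s ξ η hr hs hind hcoord v c₀ c₁ c₂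
    c₃ d₁ d₂ d₃ d₄ hv hd₁ hd₂ hd₃ hd₄
end

section
/- Let L, H > 0 and let K = [0,L] × [0,H] be a rectangle with vertices a₁ = (0,H), a₂ = (0,0), a₃ = (L,0), a₄ = (L,H) and edges Γ₁ = {0}×[0,H], Γ₂ = [0,L]×{0}, Γ₃ = {L}×[0,H], Γ₄ = [0,L]×{H}. Then for every polynomial function p : ℝ² → ℝ of total degree at most 2, the following two identities hold: ⨍_{Γ₁} ∂p/∂x + ⨍_{Γ₃} ∂p/∂x = (p(a₄) − p(a₁))/L + (p(a₃) − p(a₂))/L, and ⨍_{Γ₂} ∂p/∂y + ⨍_{Γ₄} ∂p/∂y = (p(a₄) − p(a₃))/H + (p(a₁) − p(a₂))/H. -/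
/-!
The partial derivatives of a quadratic `p` are affine, and the average of an affine function
over a segment is its value at the midpoint. The difference quotient of `p` along a horizontal
edge of length `L` is `∂ₓp` at the midpoint of that edge, so both sides of the first identity
equal `2 ∂ₓp (L/2, H/2)`; the second identity is symmetric.
-/

open ContinuousLinearMap

section Quadratic

variable (c20 c11 c02 c10 c01 c00 : ℝ)

theorem hasFDerivAt_quadratic (z : ℝ × ℝ) :
    HasFDerivAt (fun z : ℝ × ℝ => c20 * z.1 ^ 2 + c11 * z.1 * z.2 + c02 * z.2 ^ 2
      + c10 * z.1 + c01 * z.2 + c00)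
      ((2 * c20 * z.1 + c11 * z.2 + c10) • fst ℝ ℝ ℝ
        + (c11 * z.1 + 2 * c02 * z.2 + c01) • snd ℝ ℝ ℝ) z := by
  have hx : HasFDerivAt (fun z : ℝ × ℝ => z.1) (fst ℝ ℝ ℝ) z := hasFDerivAt_fst
  have hy : HasFDerivAt (fun z : ℝ × ℝ => z.2) (snd ℝ ℝ ℝ) z := hasFDerivAt_snd
  have h : HasFDerivAt (fun z : ℝ × ℝ => c20 * z.1 ^ 2 + c11 * (z.1 * z.2) + c02 * z.2 ^ 2
      + c10 * z.1 + c01 * z.2 + c00) _ z :=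
    (((((hx.pow 2).const_mul c20).add ((hx.mul hy).const_mul c11)).add
      ((hy.pow 2).const_mul c02)).add (hx.const_mul c10)).add (hy.const_mul c01) |>.add_const c00
  simp only [mul_assoc c11]
  exact h.congr_fderiv (by ext <;> simp <;> ring)

theorem fderiv_quadratic_apply (z v : ℝ × ℝ) :
    fderiv ℝ (fun z : ℝ × ℝ => c20 * z.1 ^ 2 + c11 * z.1 * z.2 + c02 * z.2 ^ 2
      + c10 * z.1 + c01 * z.2 + c00) z v
      = (2 * c20 * z.1 + c11 * z.2 + c10) * v.1 + (c11 * z.1 + 2 * c02 * z.2 + c01) * v.2 := by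
  simp [(hasFDerivAt_quadratic c20 c11 c02 c10 c01 c00 z).fderiv]

end Quadratic

theorem integral_zero_one_mul_add (a b : ℝ) : ∫ t in (0:ℝ)..1, (a * t + b) = a / 2 + b := by
  rw [intervalIntegral.integral_add (intervalIntegral.intervalIntegrable_id.const_mul a)
    intervalIntegrable_const, intervalIntegral.integral_const_mul, integral_id]
  norm_num
  ring

theorem edgeAvg_affine (p q : ℝ × ℝ) (a b c : ℝ) :
    edgeAvg p q (fun z => a * z.1 + b * z.2 + c)
      = a * ((p.1 + q.1) / 2) + b * ((p.2 + q.2) / 2) + c := by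
  have h_param (t : ℝ) : a * ((1 - t) • p + t • q).1 + b * ((1 - t) • p + t • q).2 + c
      = (a * (q.1 - p.1) + b * (q.2 - p.2)) * t + (a * p.1 + b * p.2 + c) := by
    simp only [Prod.fst_add, Prod.snd_add, Prod.smul_fst, Prod.smul_snd, smul_eq_mul]
    ring
  rw [edgeAvg, funext h_param, integral_zero_one_mul_add]
  ring

/-- On the rectangle [0,L] × [0,H] with vertices a₁ = (0,H), a₂ = (0,0), a₃ = (L,0),
a₄ = (L,H), every quadratic polynomial p satisfies the two compatibility identities
relating its vertex values with the edge averages of its first partial derivatives. -/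
theorem rectangle_quadratic_compatibility_identities
    (L H : ℝ) (hL : 0 < L) (hH : 0 < H)
    (p : ℝ × ℝ → ℝ) (c20 c11 c02 c10 c01 c00 : ℝ)
    (hp : p = fun z => c20 * z.1 ^ 2 + c11 * z.1 * z.2 + c02 * z.2 ^ 2
      + c10 * z.1 + c01 * z.2 + c00) :
    edgeAvg (0, 0) (0, H) (fun z => fderiv ℝ p z (1, 0))
        + edgeAvg (L, 0) (L, H) (fun z => fderiv ℝ p z (1, 0))
      = (p (L, H) - p (0, H)) / L + (p (L, 0) - p (0, 0)) / L ∧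
    edgeAvg (0, 0) (L, 0) (fun z => fderiv ℝ p z (0, 1))
        + edgeAvg (0, H) (L, H) (fun z => fderiv ℝ p z (0, 1))
      = (p (L, H) - p (L, 0)) / H + (p (0, H) - p (0, 0)) / H := by
  subst hp
  have h_dx : (fun z => fderiv ℝ (fun z : ℝ × ℝ => c20 * z.1 ^ 2 + c11 * z.1 * z.2
      + c02 * z.2 ^ 2 + c10 * z.1 + c01 * z.2 + c00) z (1, 0))
      = fun z => 2 * c20 * z.1 + c11 * z.2 + c10 := by
    funext z
    rw [fderiv_quadratic_apply]
    ring
  have h_dy : (fun z => fderiv ℝ (fun z : ℝ × ℝ => c20 * z.1 ^ 2 + c11 * z.1 * z.2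
      + c02 * z.2 ^ 2 + c10 * z.1 + c01 * z.2 + c00) z (0, 1))
      = fun z => c11 * z.1 + 2 * c02 * z.2 + c01 := by
    funext z
    rw [fderiv_quadratic_apply]
    ring
  rw [h_dx, h_dy]
  simp only [edgeAvg_affine]
  constructor <;> field_simp <;> ring
end

section
/- For all real numbers α, β, γ, κ, σ, δ > 0, the set of vectors (x¹₁, x¹₂, x²₁, x²₂, y¹₁, y¹₂, y¹₃, y²₁, y²₂, y²₃, z¹₁, z¹₂, z²₁, z²₂, z³₁, z³₂) ∈ ℝ¹⁶ satisfying the eighteen linear equations x¹₁/κ = z¹₁; −x¹₁/α = y¹₁; (x¹₂ − x¹₁)/σ = z¹₂ + z¹₁; −(x¹₂ + x¹₁)/α = y¹₂; −x¹₂/α = y¹₃; −x¹₂/δ = z¹₂; (x¹₁ + x²₁)/κ = z²₁; (x¹₁ − x²₁)/β = y¹₁ + y²₁; (x¹₁ + x¹₂ − x²₁ − x²₂)/β = y¹₂ + y²₂; (x¹₂ + x²₂ − x¹₁ − x²₁)/σ = z²₂ + z²₁; −(x¹₂ + x²₂)/δ = z²₂; (x¹₂ − x²₂)/β = y¹₃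 + y²₃; x²₁/κ = z³₁; x²₁/γ = y²₁; (x²₁ + x²₂)/γ = y²₂; (x²₂ − x²₁)/σ = z³₂ + z³₁; −x²₂/δ = z³₂; x²₂/γ = y²₃, is a linear subspace of ℝ¹⁶ of dimension exactly 1. -/
/-!
In each cell of the top and bottom rows of cells the equation along the edge facing the interior
gives the averaged normal derivative `y` on that edge in terms of the vertex values `x`; likewise
the left and right columns give every `z`. What remains are the six equations of the middle row
and middle column. With the weights `r₁ = α⁻¹ + β⁻¹`, `r₂ = β⁻¹ + γ⁻¹`, `c₁ = κ⁻¹ + σ⁻¹`,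
`c₂ = σ⁻¹ + δ⁻¹` they read `c₂ xᵢ₂ = c₁ xᵢ₁` and `r₁ x₁ⱼ = r₂ x₂ⱼ` (the central cell gives their
sums), so the matrix `x` is a multiple of the rank-one matrix `(r₂, r₁)ᵀ (c₂, c₁)`.
-/

namespace MorleyThreeByThree

def compatibleVectors (α β γ κ σ δ : ℝ) : Set (Fin 16 → ℝ) :=
  {v : Fin 16 → ℝ |
    v 0 / κ = v 10 ∧
    -v 0 / α = v 4 ∧
    (v 1 - v 0) / σ = v 11 + v 10 ∧
    -(v 1 + v 0) / α = v 5 ∧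
    -v 1 / α = v 6 ∧
    -v 1 / δ = v 11 ∧
    (v 0 + v 2) / κ = v 12 ∧
    (v 0 - v 2) / β = v 4 + v 7 ∧
    (v 0 + v 1 - v 2 - v 3) / β = v 5 + v 8 ∧
    (v 1 + v 3 - v 0 - v 2) / σ = v 13 + v 12 ∧
    -(v 1 + v 3) / δ = v 13 ∧
    (v 1 - v 3) / β = v 6 + v 9 ∧
    v 2 / κ = v 14 ∧
    v 2 / γ = v 7 ∧
    (v 2 + v 3) / γ = v 8 ∧
    (v 3 - v 2) / σ = v 15 + v 14 ∧
    -v 3 / δ = v 15 ∧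
    v 3 / γ = v 9}

noncomputable def ofVertexValues (α γ κ δ x₁₁ x₁₂ x₂₁ x₂₂ : ℝ) : Fin 16 → ℝ :=
  ![x₁₁, x₁₂, x₂₁, x₂₂,
    -x₁₁ / α, -(x₁₂ + x₁₁) / α, -x₁₂ / α, x₂₁ / γ, (x₂₁ + x₂₂) / γ, x₂₂ / γ,
    x₁₁ / κ, -x₁₂ / δ, (x₁₁ + x₂₁) / κ, -(x₁₂ + x₂₂) / δ, x₂₁ / κ, -x₂₂ / δ]

variable {α β γ κ σ δ : ℝ}

lemma ofVertexValues_mul (α γ κ δ t x₁₁ x₁₂ x₂₁ x₂₂ : ℝ) :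
    ofVertexValues α γ κ δ (t * x₁₁) (t * x₁₂) (t * x₂₁) (t * x₂₂) =
      t • ofVertexValues α γ κ δ x₁₁ x₁₂ x₂₁ x₂₂ := by
  ext i
  fin_cases i <;> simp [ofVertexValues] <;> ring

lemma eq_ofVertexValues_of_mem {v : Fin 16 → ℝ} (hv : v ∈ compatibleVectors α β γ κ σ δ) :
    v = ofVertexValues α γ κ δ (v 0) (v 1) (v 2) (v 3) := by
  obtain ⟨h₀, h₁, -, h₃, h₄, h₅, h₆, -, -, -, h₁₀, -, h₁₂, h₁₃, h₁₄, -, h₁₆, h₁₇⟩ := hv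
  ext i
  fin_cases i <;> first | rfl | (symm; assumption)

lemma balance_of_mem {v : Fin 16 → ℝ} (hv : v ∈ compatibleVectors α β γ κ σ δ) :
    (σ⁻¹ + δ⁻¹) * v 1 = (κ⁻¹ + σ⁻¹) * v 0 ∧ (σ⁻¹ + δ⁻¹) * v 3 = (κ⁻¹ + σ⁻¹) * v 2 ∧
      (α⁻¹ + β⁻¹) * v 0 = (β⁻¹ + γ⁻¹) * v 2 := by
  obtain ⟨h₀, h₁, h₂, -, -, h₅, -, h₇, -, -, -, -, h₁₂, h₁₃, -, h₁₅, h₁₆, -⟩ := hv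
  refine ⟨?_, ?_, ?_⟩
  · linear_combination h₂ - h₅ - h₀
  · linear_combination h₁₅ - h₁₆ - h₁₂
  · linear_combination h₇ - h₁ - h₁₃

lemma ofVertexValues_mem {x₁₁ x₁₂ x₂₁ x₂₂ : ℝ}
    (h₁ : (σ⁻¹ + δ⁻¹) * x₁₂ = (κ⁻¹ + σ⁻¹) * x₁₁) (h₂ : (σ⁻¹ + δ⁻¹) * x₂₂ = (κ⁻¹ + σ⁻¹) * x₂₁)
    (h₃ : (α⁻¹ + β⁻¹) * x₁₁ = (β⁻¹ + γ⁻¹) * x₂₁) (h₄ : (α⁻¹ + β⁻¹) * x₁₂ = (β⁻¹ + γ⁻¹) * x₂₂) :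
    ofVertexValues α γ κ δ x₁₁ x₁₂ x₂₁ x₂₂ ∈ compatibleVectors α β γ κ σ δ := by
  refine ⟨rfl, rfl, ?_, rfl, rfl, rfl, rfl, ?_, ?_, ?_, rfl, ?_, rfl, rfl, rfl, ?_, rfl, rfl⟩ <;>
    simp only [ofVertexValues, Matrix.cons_val]
  · linear_combination h₁
  · linear_combination h₃
  · linear_combination h₃ + h₄
  · linear_combination h₁ + h₂
  · linear_combination h₄
  · linear_combination h₂

lemma exists_eq_mul_of_balanced {K : Type*} [Field K] {r₁ r₂ c₁ c₂ x₁₁ x₁₂ x₂₁ x₂₂ : K}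
    (hr : r₂ ≠ 0) (hc : c₂ ≠ 0) (h₁ : c₂ * x₁₂ = c₁ * x₁₁) (h₂ : c₂ * x₂₂ = c₁ * x₂₁)
    (h₃ : r₁ * x₁₁ = r₂ * x₂₁) :
    ∃ t, x₁₁ = t * (r₂ * c₂) ∧ x₁₂ = t * (r₂ * c₁) ∧ x₂₁ = t * (r₁ * c₂) ∧
      x₂₂ = t * (r₁ * c₁) := by
  refine ⟨x₁₁ / (r₂ * c₂), ?_, ?_, ?_, ?_⟩
  · field_simp
  · field_simp; linear_combination h₁
  · field_simp; linear_combination -h₃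
  · field_simp; linear_combination r₂ * h₂ - c₁ * h₃

noncomputable def kernelVector (α β γ κ σ δ : ℝ) : Fin 16 → ℝ :=
  ofVertexValues α γ κ δ ((β⁻¹ + γ⁻¹) * (σ⁻¹ + δ⁻¹)) ((β⁻¹ + γ⁻¹) * (κ⁻¹ + σ⁻¹))
    ((α⁻¹ + β⁻¹) * (σ⁻¹ + δ⁻¹)) ((α⁻¹ + β⁻¹) * (κ⁻¹ + σ⁻¹))

lemma smul_kernelVector_mem (t : ℝ) :
    t • kernelVector α β γ κ σ δ ∈ compatibleVectors α β γ κ σ δ := by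
  rw [kernelVector, ← ofVertexValues_mul]
  exact ofVertexValues_mem (by ring) (by ring) (by ring) (by ring)

lemma exists_smul_kernelVector_eq (hβ : 0 < β) (hγ : 0 < γ) (hσ : 0 < σ) (hδ : 0 < δ)
    {v : Fin 16 → ℝ} (hv : v ∈ compatibleVectors α β γ κ σ δ) :
    ∃ t : ℝ, t • kernelVector α β γ κ σ δ = v := by
  obtain ⟨h₁, h₂, h₃⟩ := balance_of_mem hv
  obtain ⟨t, h₁₁, h₁₂, h₂₁, h₂₂⟩ :=
    exists_eq_mul_of_balanced (by positivity) (by positivity) h₁ h₂ h₃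
  refine ⟨t, ?_⟩
  calc t • kernelVector α β γ κ σ δ
      = ofVertexValues α γ κ δ (t * ((β⁻¹ + γ⁻¹) * (σ⁻¹ + δ⁻¹)))
          (t * ((β⁻¹ + γ⁻¹) * (κ⁻¹ + σ⁻¹))) (t * ((α⁻¹ + β⁻¹) * (σ⁻¹ + δ⁻¹)))
          (t * ((α⁻¹ + β⁻¹) * (κ⁻¹ + σ⁻¹))) := (ofVertexValues_mul ..).symm
    _ = ofVertexValues α γ κ δ (v 0) (v 1) (v 2) (v 3) := by rw [h₁₁, h₁₂, h₂₁, h₂₂]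
    _ = v := (eq_ofVertexValues_of_mem hv).symm

lemma coe_span_kernelVector (hβ : 0 < β) (hγ : 0 < γ) (hσ : 0 < σ) (hδ : 0 < δ) :
    (Submodule.span ℝ {kernelVector α β γ κ σ δ} : Set (Fin 16 → ℝ)) =
      compatibleVectors α β γ κ σ δ := by
  ext v
  simp only [SetLike.mem_coe, Submodule.mem_span_singleton]
  exact ⟨fun ⟨t, ht⟩ => ht ▸ smul_kernelVector_mem t, exists_smul_kernelVector_eq hβ hγ hσ hδ⟩

lemma kernelVector_ne_zero (hβ : 0 < β) (hγ : 0 < γ) (hσ : 0 < σ) (hδ : 0 < δ) :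
    kernelVector α β γ κ σ δ ≠ 0 := fun h =>
  (by positivity : 0 < (β⁻¹ + γ⁻¹) * (σ⁻¹ + δ⁻¹)).ne' (congrFun h 0)

end MorleyThreeByThree

theorem rqm_three_by_three_solution_space_dim_one_general
    (α β γ κ σ δ : ℝ)
    (hβ : 0 < β) (hγ : 0 < γ)
    (hσ : 0 < σ) (hδ : 0 < δ) :
    ∃ M : Submodule ℝ (Fin 16 → ℝ),
      (M : Set (Fin 16 → ℝ)) =
        {v : Fin 16 → ℝ |
          v 0 / κ = v 10 ∧
          -v 0 / α = v 4 ∧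
          (v 1 - v 0) / σ = v 11 + v 10 ∧
          -(v 1 + v 0) / α = v 5 ∧
          -v 1 / α = v 6 ∧
          -v 1 / δ = v 11 ∧
          (v 0 + v 2) / κ = v 12 ∧
          (v 0 - v 2) / β = v 4 + v 7 ∧
          (v 0 + v 1 - v 2 - v 3) / β = v 5 + v 8 ∧
          (v 1 + v 3 - v 0 - v 2) / σ = v 13 + v 12 ∧
          -(v 1 + v 3) / δ = v 13 ∧
          (v 1 - v 3) / β = v 6 + v 9 ∧
          v 2 / κ = v 14 ∧
          v 2 / γ = v 7 ∧
          (v 2 + v 3) / γ = v 8 ∧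
          (v 3 - v 2) / σ = v 15 + v 14 ∧
          -v 3 / δ = v 15 ∧
          v 3 / γ = v 9} ∧
      Module.finrank ℝ M = 1 :=
  ⟨Submodule.span ℝ {MorleyThreeByThree.kernelVector α β γ κ σ δ},
    MorleyThreeByThree.coe_span_kernelVector hβ hγ hσ hδ,
    finrank_span_singleton (MorleyThreeByThree.kernelVector_ne_zero hβ hγ hσ hδ)⟩

/-- The solution set of the eighteen per-cell compatibility equations for the
homogeneous reduced quadrilateral Morley space on a 3×3 rectangular subdivision
(with column widths κ, σ, δ and row heights α, β, γ) is a linear subspace of ℝ¹⁶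
of dimension exactly 1.  The 16 unknowns are ordered as
(x¹₁, x¹₂, x²₁, x²₂, y¹₁, y¹₂, y¹₃, y²₁, y²₂, y²₃, z¹₁, z¹₂, z²₁, z²₂, z³₁, z³₂). -/
theorem rqm_three_by_three_solution_space_dim_one
    (α β γ κ σ δ : ℝ)
    (hα : 0 < α) (hβ : 0 < β) (hγ : 0 < γ)
    (hκ : 0 < κ) (hσ : 0 < σ) (hδ : 0 < δ) :
    ∃ M : Submodule ℝ (Fin 16 → ℝ),
      (M : Set (Fin 16 → ℝ)) =
        {v : Fin 16 → ℝ |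
          v 0 / κ = v 10 ∧
          -v 0 / α = v 4 ∧
          (v 1 - v 0) / σ = v 11 + v 10 ∧
          -(v 1 + v 0) / α = v 5 ∧
          -v 1 / α = v 6 ∧
          -v 1 / δ = v 11 ∧
          (v 0 + v 2) / κ = v 12 ∧
          (v 0 - v 2) / β = v 4 + v 7 ∧
          (v 0 + v 1 - v 2 - v 3) / β = v 5 + v 8 ∧
          (v 1 + v 3 - v 0 - v 2) / σ = v 13 + v 12 ∧
          -(v 1 + v 3) / δ = v 13 ∧
          (v 1 - v 3) / β = v 6 + v 9 ∧
          v 2 / κ = v 14 ∧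
          v 2 / γ = v 7 ∧
          (v 2 + v 3) / γ = v 8 ∧
          (v 3 - v 2) / σ = v 15 + v 14 ∧
          -v 3 / δ = v 15 ∧
          v 3 / γ = v 9} ∧
      Module.finrank ℝ M = 1 :=
  rqm_three_by_three_solution_space_dim_one_general α β γ κ σ δ hβ hγ hσ hδ
end
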